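/- arXiv:2602.10377 — 2 statements merged into one kernel-verified Lean document; each statement's English description precedes it below -/
import Mathlib

section
/- Let α_m, κ_m, α_l, κ_l, F̄_p, ξ_F, d, g, m be positive reals. If α_m·κ_m·g^{α_m−1}/d^{α_m} = 4·m·d²/g² (the prefill stationarity condition for the GQA ratio) and m = α_l·κ_l·ξ_F^{α_l−1}·d^{2·(α_l−1)}/F̄_p^{α_l}, then g = (4·α_l·κ_l·ξ_F^{α_l−1}·d^{2·α_l+α_m}/(α_m·κ_m·F̄_p^{α_l}))^{1/(α_m+1)}. -/
/-! Clearing denominators turns the stationarity condition into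
`αm·κm·g^(αm+1) = 4·m·d^(αm+2)`; substituting `m` collects the powers of `d` into
`d^(2αl+αm)`, and the `(αm+1)`-th root of a positive `g^(αm+1)` is `g`. -/

namespace Real

theorem rpow_add_one_eq_of_mul_rpow_sub_one_div_eq {a κ c d g : ℝ} (ha : a ≠ 0) (hκ : κ ≠ 0)
    (hd : 0 < d) (hg : 0 < g) (h : a * κ * g ^ (a - 1) / d ^ a = c * d ^ 2 / g ^ 2) :
    g ^ (a + 1) = c * d ^ (a + 2) / (a * κ) := by
  have hg_pow : g ^ (a + 1) = g ^ (a - 1) * g ^ 2 := by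
    rw [← rpow_natCast, ← rpow_add hg]
    norm_num [sub_add_eq_add_sub, add_sub_assoc]
  have hd_pow : d ^ (a + 2) = d ^ a * d ^ 2 := by
    rw [← rpow_natCast, ← rpow_add hd]
    norm_num
  have hda : d ^ a ≠ 0 := (rpow_pos_of_pos hd a).ne'
  rw [hg_pow, hd_pow, eq_div_iff (mul_ne_zero ha hκ)]
  field_simp at h
  linear_combination h

end Real

theorem prefill_optimal_gqa_ratio_general
    (αm κm αl κl Fp ξF d g m : ℝ)
    (hαm : 0 < αm) (hκm : 0 < κm)
    (hd : 0 < d) (hg : 0 < g)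
    (hstat : αm * κm * g ^ (αm - 1) / d ^ αm = 4 * m * d ^ 2 / g ^ 2)
    (hmul : m = αl * κl * ξF ^ (αl - 1) * d ^ (2 * (αl - 1)) / Fp ^ αl) :
    g = (4 * αl * κl * ξF ^ (αl - 1) * d ^ (2 * αl + αm) /
          (αm * κm * Fp ^ αl)) ^ (1 / (αm + 1)) := by
  have hg_pow := Real.rpow_add_one_eq_of_mul_rpow_sub_one_div_eq hαm.ne' hκm.ne' hd hg hstat
  have hd_pow : d ^ (2 * αl + αm) = d ^ (2 * (αl - 1)) * d ^ (αm + 2) := by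
    rw [← Real.rpow_add hd]
    ring_nf
  have hsolved : g ^ (αm + 1) = 4 * αl * κl * ξF ^ (αl - 1) * d ^ (2 * αl + αm) /
      (αm * κm * Fp ^ αl) := by
    rw [hg_pow, hmul, hd_pow]
    ring
  rw [← hsolved, one_div, Real.rpow_rpow_inv hg.le (by positivity)]

/-- Prefill-latency-constrained optimal GQA ratio: from the stationarity
condition `αm·κm·g^(αm−1)/d^αm = 4·m·d²/g²` and the multiplier–depth product
`m = αl·κl·ξF^(αl−1)·d^(2(αl−1))/F̄p^αl`, the GQA ratio satisfies
`g = (4·αl·κl·ξF^(αl−1)·d^(2αl+αm)/(αm·κm·F̄p^αl))^(1/(αm+1))`. -/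
theorem prefill_optimal_gqa_ratio
    (αm κm αl κl Fp ξF d g m : ℝ)
    (hαm : 0 < αm) (hκm : 0 < κm) (hαl : 0 < αl) (hκl : 0 < κl)
    (hFp : 0 < Fp) (hξF : 0 < ξF) (hd : 0 < d) (hg : 0 < g) (hm : 0 < m)
    (hstat : αm * κm * g ^ (αm - 1) / d ^ αm = 4 * m * d ^ 2 / g ^ 2)
    (hmul : m = αl * κl * ξF ^ (αl - 1) * d ^ (2 * (αl - 1)) / Fp ^ αl) :
    g = (4 * αl * κl * ξF ^ (αl - 1) * d ^ (2 * αl + αm) /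
          (αm * κm * Fp ^ αl)) ^ (1 / (αm + 1)) :=
  prefill_optimal_gqa_ratio_general αm κm αl κl Fp ξF d g m hαm hκm hd hg hstat hmul
end

section
/- Let α_m, κ_m, α_l, κ_l, M̄_d, Γ, d, g, b_w, b_kv, S̄, m be positive reals. If α_m·κ_m·g^{α_m−1}/d^{α_m} = (2·m/g²)·(d²·b_w + S̄·d·b_kv) (the decode stationarity condition for the GQA ratio, including the KV-cache correction) and m = α_l·κ_l·Γ^{α_l−1}/M̄_d^{α_l}, then g = (2·α_l·κ_l·Γ^{α_l−1}·d^{α_m}·(d²·b_w + S̄·d·b_kv)/(α_m·κ_m·M̄_d^{α_l}))^{1/(α_m+1)}. -/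
/-- Decode-latency-constrained optimal GQA ratio (with KV-cache correction):
from the stationarity condition
`αm·κm·g^(αm−1)/d^αm = (2·m/g²)·(d²·b_w + S̄·d·b_kv)` and the multiplier–depth
product `m = αl·κl·Γ^(αl−1)/M̄_d^αl`, the GQA ratio satisfies
`g = (2·αl·κl·Γ^(αl−1)·d^αm·(d²·b_w + S̄·d·b_kv)/(αm·κm·M̄_d^αl))^(1/(αm+1))`. -/
theorem decode_optimal_gqa_ratio
    (αm κm αl κl Md Γ d g bw bkv Sbar m : ℝ)
    (hαm : 0 < αm) (hκm : 0 < κm) (hαl : 0 < αl) (hκl : 0 < κl)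
    (hMd : 0 < Md) (hΓ : 0 < Γ) (hd : 0 < d) (hg : 0 < g)
    (hbw : 0 < bw) (hbkv : 0 < bkv) (hSbar : 0 < Sbar) (hm : 0 < m)
    (hstat : αm * κm * g ^ (αm - 1) / d ^ αm =
      (2 * m / g ^ 2) * (d ^ 2 * bw + Sbar * d * bkv))
    (hmul : m = αl * κl * Γ ^ (αl - 1) / Md ^ αl) :
    g = (2 * αl * κl * Γ ^ (αl - 1) * d ^ αm * (d ^ 2 * bw + Sbar * d * bkv) /
          (αm * κm * Md ^ αl)) ^ (1 / (αm + 1)) := by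
  have hdpow : (0:ℝ) < d ^ αm := Real.rpow_pos_of_pos hd _
  have hMpow : (0:ℝ) < Md ^ αl := Real.rpow_pos_of_pos hMd _
  have hg2 : (0:ℝ) < g ^ 2 := by positivity
  have hA : (0:ℝ) < d ^ 2 * bw + Sbar * d * bkv := by positivity
  have key : g ^ (αm + 1) =
      2 * m * (d ^ 2 * bw + Sbar * d * bkv) * d ^ αm / (αm * κm) := by
    have h1 : αm * κm * g ^ (αm - 1) * g ^ 2 =
        2 * m * (d ^ 2 * bw + Sbar * d * bkv) * d ^ αm := by
      field_simp at hstat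
      linarith [hstat]
    have h2 : g ^ (αm - 1) * g ^ 2 = g ^ (αm + 1) := by
      rw [← Real.rpow_natCast g 2, ← Real.rpow_add hg]
      norm_num
      congr 1
      ring
    rw [eq_div_iff (by positivity)]
    calc g ^ (αm + 1) * (αm * κm) = αm * κm * g ^ (αm - 1) * g ^ 2 := by
          rw [← h2]; ring
      _ = _ := h1
  have hrhs : g ^ (αm + 1) =
      2 * αl * κl * Γ ^ (αl - 1) * d ^ αm * (d ^ 2 * bw + Sbar * d * bkv) /
        (αm * κm * Md ^ αl) := by
    rw [key, hmul]; field_simp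
  have h1 : αm + 1 ≠ 0 := by linarith
  rw [← hrhs, ← Real.rpow_mul hg.le, mul_one_div, div_self h1, Real.rpow_one]
end
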